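/- Let t be a real number with |t| < 1. Then for every (x, y) ∈ ℝ² there exists a unique pair (x₀, y₀) ∈ ℝ² such that x₀ − t·sin y₀ = x and y₀ + t·cos x₀ = y. That is, the characteristic map (x₀, y₀) ↦ (x₀ − t·sin y₀, y₀ + t·cos x₀) is a bijection of ℝ² for |t| < 1. -/

import Mathlib

open Real Function

/- The characteristic map is `p ↦ p + g p` with `g p = (-t sin p.2, t cos p.1)`, and `g` is
`|t|`-Lipschitz for the sup norm of `ℝ × ℝ`. For `|t| < 1`, solving `p + g p = q` is finding the
fixed point of the contraction `p ↦ q - g p`, so Banach's fixed point theorem gives a unique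
solution for every `q`. -/

theorem LipschitzWith.bijective_add_self {E : Type*} [NormedAddCommGroup E] [CompleteSpace E]
    {K : NNReal} {g : E → E} (hK : K < 1) (hg : LipschitzWith K g) :
    Bijective fun x => x + g x := by
  rw [bijective_iff_existsUnique]
  intro y
  have hc : ContractingWith K fun x => y - g x :=
    ⟨hK, by simpa using (LipschitzWith.const y).sub hg⟩
  have isFixedPt_iff (x : E) : IsFixedPt (fun x => y - g x) x ↔ x + g x = y := by
    rw [IsFixedPt, sub_eq_iff_eq_add, eq_comm]
  exact ⟨hc.fixedPoint _, (isFixedPt_iff _).1 hc.fixedPoint_isFixedPt,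
    fun x hx => hc.fixedPoint_unique ((isFixedPt_iff x).2 hx)⟩

theorem lipschitzWith_neg_mul_sin_snd_mul_cos_fst (t : ℝ) :
    LipschitzWith ‖t‖₊ fun p : ℝ × ℝ => (-t * sin p.2, t * cos p.1) := by
  have h₁ := (lipschitzWith_smul (-t)).comp
    (lipschitzWith_sin.comp (LipschitzWith.prod_snd (α := ℝ)))
  have h₂ := (lipschitzWith_smul t).comp
    (lipschitzWith_cos.comp (LipschitzWith.prod_fst (β := ℝ)))
  simpa using h₁.prodMk h₂

/-- For `|t| < 1`, the characteristic map
`(x₀, y₀) ↦ (x₀ - t sin y₀, y₀ + t cos x₀)` of the two-dimensional problem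
`φ_t + φ_x φ_y = 0` with initial data `sin x + cos y` is a bijection of `ℝ²`:
for every `(x, y)` there is a unique `(x₀, y₀)` with `x₀ - t sin y₀ = x` and
`y₀ + t cos x₀ = y`. -/
theorem stmt_14 (t : ℝ) (ht : |t| < 1) :
    (∀ x y : ℝ, ∃! p : ℝ × ℝ,
      p.1 - t * sin p.2 = x ∧ p.2 + t * cos p.1 = y) ∧
    Function.Bijective
      (fun p : ℝ × ℝ => (p.1 - t * sin p.2, p.2 + t * cos p.1)) := by
  have hK : ‖t‖₊ < 1 := by simpa [← NNReal.coe_lt_coe] using ht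
  have hbij : Bijective fun p : ℝ × ℝ => (p.1 - t * sin p.2, p.2 + t * cos p.1) := by
    convert (lipschitzWith_neg_mul_sin_snd_mul_cos_fst t).bijective_add_self hK using 2
    ext <;> simp [sub_eq_add_neg]
  refine ⟨fun x y => ?_, hbij⟩
  simpa only [Prod.ext_iff] using (bijective_iff_existsUnique _).1 hbij (x, y)
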